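/- The moment map equation: let $\mathcal{E}$ be a holomorphic vector bundle with hermitian metric $h$, $\nabla$ its Chern connection with curvature $K$, $V$ a holomorphic vector field on $X$, and $\tilde V$ a holomorphic first-order differential operator on $\mathcal{E}$ with symbol $V$. Then the moment map $\mu = \tilde V - \nabla_V$, a smooth endomorphism of $\mathcal{E}$, satisfies $\bar\partial_{\mathrm{End}(\mathcal{E})}\,\mu = \iota_V K$. -/

import Mathlib

/-- The `(0,1)` (Wirtinger) directional derivative `∂̄_w f (z)` of a smooth function on ℂⁿ. -/
noncomputable def dbarDir {n : ℕ} {F : Type*} [NormedAddCommGroup F] [NormedSpace ℂ F]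
    (f : (Fin n → ℂ) → F) (z w : Fin n → ℂ) : F :=
  (2 : ℂ)⁻¹ • (fderiv ℝ f z w + Complex.I • fderiv ℝ f z (Complex.I • w))

/-- The `(1,0)` (Wirtinger) directional derivative `∂_w f (z)` of a smooth function on ℂⁿ. -/
noncomputable def dDir {n : ℕ} {F : Type*} [NormedAddCommGroup F] [NormedSpace ℂ F]
    (f : (Fin n → ℂ) → F) (z w : Fin n → ℂ) : F :=
  (2 : ℂ)⁻¹ • (fderiv ℝ f z w - Complex.I • fderiv ℝ f z (Complex.I • w))

/- STATEMENT 6: The moment map equation, in a local holomorphic trivialization over ℂⁿ.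
`h` is a hermitian metric on the (trivialized) rank-`r` holomorphic bundle `ℰ`, whose Chern
connection has connection form `ω = h⁻¹ ∂h` and curvature `K = ∂̄ω` (a `(1,1)`-form);
`V` is a holomorphic vector field; the lift `Ṽ = ∂_V + B`, with `B` a holomorphic
endomorphism-valued function, is a holomorphic first-order operator with symbol `V`.
The moment map `μ = Ṽ - ∇_V = B - ω(V)` satisfies `∂̄ μ = ι_V K`; here, contracting
`K = ∂̄ω` (with the `(1,0)` slot first, `K = Σ K_{i j̄} dzⁱ ∧ dz̄ʲ`) with `V` gives
`(ι_V K)(w̄) = -∂̄_w (ω(V(z)))` with the argument of `ω` frozen at `z`. -/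
lemma dbar_holo {n : ℕ} {F : Type*} [NormedAddCommGroup F] [NormedSpace ℂ F]
    {f : (Fin n → ℂ) → F} {z : Fin n → ℂ} (hf : DifferentiableAt ℂ f z) (w : Fin n → ℂ) :
    dbarDir f z w = 0 := by
  have h1 : fderiv ℝ f z = (fderiv ℂ f z).restrictScalars ℝ := hf.fderiv_restrictScalars ℝ
  simp only [dbarDir, h1, ContinuousLinearMap.coe_restrictScalars']
  rw [map_smul, smul_smul, Complex.I_mul_I, neg_one_smul]
  simp

lemma dbar_sub {n : ℕ} {F : Type*} [NormedAddCommGroup F] [NormedSpace ℂ F]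
    {f g : (Fin n → ℂ) → F} {z : Fin n → ℂ} (hf : DifferentiableAt ℝ f z)
    (hg : DifferentiableAt ℝ g z) (w : Fin n → ℂ) :
    dbarDir (fun y => f y - g y) z w = dbarDir f z w - dbarDir g z w := by
  simp only [dbarDir, fderiv_fun_sub hf hg, ContinuousLinearMap.sub_apply]
  module

lemma key {n : ℕ} {F : Type*} [NormedAddCommGroup F] [NormedSpace ℂ F]
    (g : (Fin n → ℂ) → ((Fin n → ℂ) →L[ℝ] F))
    (V : (Fin n → ℂ) → (Fin n → ℂ)) (z w : Fin n → ℂ)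
    (hg : DifferentiableAt ℝ g z)
    (hgc : ∀ v, g z (Complex.I • v) = Complex.I • g z v)
    (hV : DifferentiableAt ℂ V z) :
    dbarDir (fun y => g y (V y)) z w = dbarDir (fun y => g y (V z)) z w := by
  have hVr := hV.restrictScalars ℝ
  have h1 := fderiv_clm_apply hg hVr
  have h2 := fderiv_clm_apply hg (differentiableAt_const (V z))
  have hI : ∀ u, fderiv ℝ V z (Complex.I • u) = Complex.I • fderiv ℝ V z u := by
    intro u
    rw [hV.fderiv_restrictScalars ℝ]
    simp only [ContinuousLinearMap.coe_restrictScalars', map_smul]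
  simp only [dbarDir, h1, h2, fderiv_fun_const, Pi.zero_apply, ContinuousLinearMap.comp_zero,
    zero_add, ContinuousLinearMap.add_apply, ContinuousLinearMap.comp_apply,
    ContinuousLinearMap.flip_apply]
  rw [hI w, hgc]
  generalize (g z) ((fderiv ℝ V z) w) = a
  generalize ((fderiv ℝ g z) w) (V z) = b
  generalize ((fderiv ℝ g z) (Complex.I • w)) (V z) = c
  have e1 : Complex.I • Complex.I • a = -a := by
    rw [smul_smul, Complex.I_mul_I, neg_one_smul]
  rw [smul_add, smul_add, smul_add, e1]
  module

set_option maxHeartbeats 2000000 in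
set_option synthInstance.maxHeartbeats 1000000 in

set_option maxHeartbeats 2000000 in
set_option synthInstance.maxHeartbeats 1000000 in
theorem stmt6 (n r : ℕ)
    (h : (Fin n → ℂ) → (EuclideanSpace ℂ (Fin r) →L[ℂ] EuclideanSpace ℂ (Fin r)))
    (hsmooth : ContDiff ℝ (⊤ : ℕ∞) h)
    (hherm : ∀ z, IsSelfAdjoint (h z))
    (hinv : ∀ z, IsUnit (h z))
    (V : (Fin n → ℂ) → (Fin n → ℂ)) (hV : Differentiable ℂ V)
    (B : (Fin n → ℂ) → (EuclideanSpace ℂ (Fin r) →L[ℂ] EuclideanSpace ℂ (Fin r)))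
    (hB : Differentiable ℂ B)
    -- the connection form `ω(v) = h⁻¹ ∂_v h` of the Chern connection
    (ω : (Fin n → ℂ) → (Fin n → ℂ) → (EuclideanSpace ℂ (Fin r) →L[ℂ] EuclideanSpace ℂ (Fin r)))
    (hω : ∀ z v, ω z v = Ring.inverse (h z) * dDir h z v)
    -- the moment map `μ = Ṽ - ∇_V = B - ω(V)`
    (μ : (Fin n → ℂ) → (EuclideanSpace ℂ (Fin r) →L[ℂ] EuclideanSpace ℂ (Fin r)))
    (hμ : ∀ z, μ z = B z - ω z (V z)) :
    -- `∂̄ μ = ι_V K`, where `K = ∂̄ω` is the curvature of the Chern connection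
    ∀ z w, dbarDir μ z w = -dbarDir (fun y => ω y (V z)) z w := by
  intro z w
  set mulI : (Fin n → ℂ) →L[ℝ] (Fin n → ℂ) :=
    Complex.I • (ContinuousLinearMap.id ℝ (Fin n → ℂ)) with hmulI
  set g : (Fin n → ℂ) → ((Fin n → ℂ) →L[ℝ] (EuclideanSpace ℂ (Fin r) →L[ℂ] EuclideanSpace ℂ (Fin r))) := fun y =>
    (2:ℂ)⁻¹ • ((ContinuousLinearMap.mul ℝ (EuclideanSpace ℂ (Fin r) →L[ℂ] EuclideanSpace ℂ (Fin r)) (Ring.inverse (h y))).comp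
      (fderiv ℝ h y - Complex.I • ((fderiv ℝ h y).comp mulI))) with hgdef
  have hgeq : ∀ y v, g y v = ω y v := by
    intro y v
    rw [hω]
    simp only [hgdef, hmulI, dDir, ContinuousLinearMap.smul_apply,
      ContinuousLinearMap.comp_apply, ContinuousLinearMap.sub_apply,
      ContinuousLinearMap.id_apply, ContinuousLinearMap.mul_apply', mul_smul_comm]
  -- differentiability of g at z
  have hhd : Differentiable ℝ h := hsmooth.differentiable (by simp)
  have hD : Differentiable ℝ (fderiv ℝ h) :=
    (hsmooth.fderiv_right (m := 1) ((by exact WithTop.coe_le_coe.mpr le_top))).differentiable (by simp)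
  have hinvd : DifferentiableAt ℝ (fun y => Ring.inverse (h y)) z :=
    (differentiableAt_inverse (hinv z)).comp z (hhd z)
  have hmul : DifferentiableAt ℝ
      (fun y => ContinuousLinearMap.mul ℝ (EuclideanSpace ℂ (Fin r) →L[ℂ] EuclideanSpace ℂ (Fin r)) (Ring.inverse (h y))) z :=
    by
      have hm := (ContinuousLinearMap.mul ℝ (EuclideanSpace ℂ (Fin r) →L[ℂ] EuclideanSpace ℂ (Fin r))).differentiableAt (x := Ring.inverse (h z))
      exact DifferentiableAt.comp (g := fun a => ContinuousLinearMap.mul ℝ (EuclideanSpace ℂ (Fin r) →L[ℂ] EuclideanSpace ℂ (Fin r)) a) z hm hinvd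
  have hL : DifferentiableAt ℝ
      (fun y => fderiv ℝ h y - Complex.I • ((fderiv ℝ h y).comp mulI)) z :=
    (hD z).sub (((hD z).clm_comp (differentiableAt_const mulI)).const_smul Complex.I)
  have hg : DifferentiableAt ℝ g z := (hmul.clm_comp hL).const_smul ((2:ℂ)⁻¹)
  -- ℂ-linearity of g z
  have hgc : ∀ v, g z (Complex.I • v) = Complex.I • g z v := by
    intro v
    simp only [hgdef, hmulI, ContinuousLinearMap.smul_apply,
      ContinuousLinearMap.comp_apply, ContinuousLinearMap.sub_apply,
      ContinuousLinearMap.id_apply, ContinuousLinearMap.mul_apply']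
    have e2 : Complex.I • Complex.I • v = -v := by
      rw [smul_smul, Complex.I_mul_I, neg_one_smul]
    rw [e2, map_neg, smul_neg, sub_neg_eq_add]
    have e3 : Complex.I • (Ring.inverse (h z) *
        ((fderiv ℝ h z) v - Complex.I • (fderiv ℝ h z) (Complex.I • v)))
        = Ring.inverse (h z) *
          ((fderiv ℝ h z) (Complex.I • v) + Complex.I • (fderiv ℝ h z) v) := by
      rw [← mul_smul_comm Complex.I, smul_sub, smul_smul Complex.I Complex.I,
        Complex.I_mul_I]
      congr 1
      module
    rw [smul_comm Complex.I ((2:ℂ)⁻¹), e3]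
  have hμ' : μ = fun y => B y - g y (V y) := funext fun y => by rw [hμ, hgeq]
  have e2 : (fun y => ω y (V z)) = fun y => g y (V z) :=
    funext fun y => (hgeq y (V z)).symm
  rw [hμ', e2, dbar_sub ((hB z).restrictScalars ℝ) (hg.clm_apply ((hV z).restrictScalars ℝ)),
    dbar_holo (hB z) w, key g V z w hg hgc (hV z), zero_sub]
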